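/- Let a,b,c,d be real numbers with c ≠ 0 and set Δ = (d−a)² + 4bc. Assume Δ < 0 (so that ad−bc = ((a+d)² − Δ)/4 > 0). Let M be the Möbius transformation of the one-point compactification ℝ ∪ {∞} extending t ↦ (at+b)/(ct+d) (with M(−d/c) = ∞ and M(∞) = a/c), and let ξ = ((a+d) + i√(−Δ)) / ((a+d) − i√(−Δ)) ∈ ℂ. Then for every integer p ≥ 1, the p-th iterate of M is the identity on ℝ ∪ {∞} and no k-th iterate with 0 < k < p is the identity, if and only if ξ is a primitive p-th root of unity. -/
import Mathlib


open OnePoint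

/-- The Möbius transformation `t ↦ (a t + b)/(c t + d)` extended to the one-point
compactification `ℝ ∪ {∞}`, with `M(-d/c) = ∞` and `M(∞) = a/c`. -/
noncomputable def mobius (a b c d : ℝ) (p : OnePoint ℝ) : OnePoint ℝ :=
  match p with
  | Option.none => ((a / c : ℝ) : OnePoint ℝ)
  | Option.some t =>
      if c * t + d = 0 then (∞ : OnePoint ℝ)
      else (((a * t + b) / (c * t + d) : ℝ) : OnePoint ℝ)

/-- Conjugating map: `φ(∞) = 1`, `φ(t) = (2ct-(a-d) - i s)/(2ct-(a-d) + i s)`. -/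
noncomputable def phiC (a c d s : ℝ) (x : OnePoint ℝ) : ℂ :=
  match x with
  | Option.none => 1
  | Option.some t =>
      (((2 * c * t - (a - d) : ℝ) : ℂ) - Complex.I * (s : ℂ)) /
      (((2 * c * t - (a - d) : ℝ) : ℂ) + Complex.I * (s : ℂ))

lemma phiC_infty (a c d s : ℝ) : phiC a c d s ∞ = 1 := rfl

lemma phiC_coe (a c d s t : ℝ) :
    phiC a c d s (t : OnePoint ℝ) =
      (((2 * c * t - (a - d) : ℝ) : ℂ) - Complex.I * (s : ℂ)) /
      (((2 * c * t - (a - d) : ℝ) : ℂ) + Complex.I * (s : ℂ)) := rfl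

section Aux

variable {a b c d s : ℝ}

lemma ne_add_I (hs : 0 < s) (x : ℝ) : ((x : ℝ) : ℂ) + Complex.I * (s : ℂ) ≠ 0 := by
  intro h
  have := congrArg Complex.im h
  simp at this
  linarith

lemma ne_sub_I (hs : 0 < s) (x : ℝ) : ((x : ℝ) : ℂ) - Complex.I * (s : ℂ) ≠ 0 := by
  intro h
  have := congrArg Complex.im h
  simp at this
  linarith

lemma phiC_ne_zero (hs : 0 < s) (x : OnePoint ℝ) : phiC a c d s x ≠ 0 := by
  cases x with
  | infty => simp [phiC]
  | coe t =>
      exact div_ne_zero (ne_sub_I hs _) (ne_add_I hs _)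

lemma phiC_injective (hc : c ≠ 0) (hs : 0 < s) : Function.Injective (phiC a c d s) := by
  intro x y hxy
  cases x with
  | infty =>
      cases y with
      | infty => rfl
      | coe t =>
          exfalso
          rw [phiC_infty, phiC_coe, eq_div_iff (ne_add_I hs _)] at hxy
          have := congrArg Complex.im hxy
          simp at this
          linarith
  | coe t =>
      cases y with
      | infty =>
          exfalso
          rw [phiC_coe, phiC_infty, div_eq_iff (ne_add_I hs _)] at hxy
          have := congrArg Complex.im hxy
          simp at this
          linarith
      | coe u =>
          rw [phiC_coe, phiC_coe, div_eq_div_iff (ne_add_I hs _) (ne_add_I hs _)] at hxy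
          have h2 := congrArg Complex.im hxy
          simp [Complex.add_im, Complex.sub_im, Complex.mul_im] at h2
          have hct : 2 * c * t - (a - d) = 2 * c * u - (a - d) := by nlinarith
          have htu : t = u := by
            have h3 : 2 * c * t = 2 * c * u := by linarith
            have h4 : (2 * c) ≠ 0 := by simpa using hc
            exact mul_left_cancel₀ h4 h3
          exact congrArg _ htu

end Aux

lemma mobius_infty (a b c d : ℝ) : mobius a b c d ∞ = ((a / c : ℝ) : OnePoint ℝ) := rfl

lemma mobius_coe (a b c d t : ℝ) :
    mobius a b c d (t : OnePoint ℝ) =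
      if c * t + d = 0 then (∞ : OnePoint ℝ)
      else (((a * t + b) / (c * t + d) : ℝ) : OnePoint ℝ) := rfl

lemma phiC_mobius (a b c d s : ℝ) (hc : c ≠ 0) (hs : 0 < s)
    (hs2 : s ^ 2 = -((d - a) ^ 2 + 4 * b * c)) (x : OnePoint ℝ) :
    phiC a c d s (mobius a b c d x) =
      ((((a + d : ℝ)) : ℂ) - Complex.I * (s : ℂ)) / ((((a + d : ℝ)) : ℂ) + Complex.I * (s : ℂ)) *
        phiC a c d s x := by
  set j : ℂ := Complex.I * (s : ℂ) with hjdef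
  have hj : j ^ 2 = (((d - a) ^ 2 + 4 * b * c : ℝ) : ℂ) := by
    have h0 : j ^ 2 = Complex.I ^ 2 * ((s : ℝ) : ℂ) ^ 2 := by rw [hjdef]; ring
    have h1 : ((s : ℝ) : ℂ) ^ 2 = ((s ^ 2 : ℝ) : ℂ) := by push_cast; ring
    rw [h0, Complex.I_sq, h1, hs2]
    push_cast
    ring
  push_cast at hj
  cases x with
  | infty =>
      rw [mobius_infty, phiC_coe, phiC_infty, mul_one]
      have h1 : (2 * c * (a / c) - (a - d) : ℝ) = a + d := by field_simp; ring
      rw [h1]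
  | coe t =>
      rw [mobius_coe]
      by_cases h : c * t + d = 0
      · rw [if_pos h, phiC_infty, phiC_coe]
        have hr : (2 * c * t - (a - d) : ℝ) = -(a + d) := by linarith
        rw [hr, div_mul_div_comm, eq_comm, div_eq_one_iff_eq
          (mul_ne_zero (ne_add_I hs _) (ne_add_I hs _))]
        push_cast
        ring
      · rw [if_neg h, phiC_coe, phiC_coe]
        have hctd : ((c * t + d : ℝ) : ℂ) ≠ 0 := by
          exact_mod_cast Complex.ofReal_ne_zero.mpr h
        rw [div_mul_div_comm, div_eq_div_iff (ne_add_I hs _)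
          (mul_ne_zero (ne_add_I hs _) (ne_add_I hs _))]
        have hX : ((2 * c * ((a * t + b) / (c * t + d)) - (a - d) : ℝ) : ℂ) =
            ((2 * c * (a * t + b) - (a - d) * (c * t + d) : ℝ) : ℂ) / ((c * t + d : ℝ) : ℂ) := by
          have hctd' : (c : ℂ) * (t : ℂ) + (d : ℂ) ≠ 0 := by
            push_cast at hctd; exact hctd
          push_cast
          field_simp
        have hctd2 : (c : ℂ) * (t : ℂ) + (d : ℂ) ≠ 0 := by
          push_cast at hctd; exact hctd
        rw [hX]
        push_cast
        field_simp [hctd2]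
        linear_combination (-2 * (((c : ℂ)) * (t : ℂ) + (d : ℂ)) * j) * hj

lemma phiC_mobius_iter (a b c d s : ℝ) (hc : c ≠ 0) (hs : 0 < s)
    (hs2 : s ^ 2 = -((d - a) ^ 2 + 4 * b * c)) (k : ℕ) (x : OnePoint ℝ) :
    phiC a c d s ((mobius a b c d)^[k] x) =
      (((((a + d : ℝ)) : ℂ) - Complex.I * (s : ℂ)) / ((((a + d : ℝ)) : ℂ) + Complex.I * (s : ℂ))) ^ k *
        phiC a c d s x := by
  induction k with
  | zero => simp
  | succ n ih =>
      rw [Function.iterate_succ_apply', phiC_mobius a b c d s hc hs hs2, ih, pow_succ]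
      ring

/-- For a real Möbius map with `c ≠ 0` and `Δ = (d-a)² + 4bc < 0`, and
`ξ = ((a+d) + i√(-Δ))/((a+d) - i√(-Δ))`, the map is periodic with minimal period `p`
(on `ℝ ∪ {∞}`) if and only if `ξ` is a primitive `p`-th root of unity. -/
theorem stmt_0 (a b c d : ℝ) (hc : c ≠ 0)
    (hΔ : (d - a) ^ 2 + 4 * b * c < 0) (p : ℕ) (hp : 1 ≤ p)
    (ξ : ℂ)
    (hξ : ξ = (((a + d : ℝ) : ℂ) + Complex.I * ((Real.sqrt (-((d - a) ^ 2 + 4 * b * c)) : ℝ) : ℂ)) /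
              (((a + d : ℝ) : ℂ) - Complex.I * ((Real.sqrt (-((d - a) ^ 2 + 4 * b * c)) : ℝ) : ℂ))) :
    ((mobius a b c d)^[p] = id ∧ ∀ k : ℕ, 0 < k → k < p → (mobius a b c d)^[k] ≠ id) ↔
      (ξ ^ p = 1 ∧ ∀ k : ℕ, 0 < k → k < p → ξ ^ k ≠ 1) := by
  set s : ℝ := Real.sqrt (-((d - a) ^ 2 + 4 * b * c)) with hsdef
  have hs : 0 < s := Real.sqrt_pos.mpr (by linarith)
  have hs2 : s ^ 2 = -((d - a) ^ 2 + 4 * b * c) := Real.sq_sqrt (by linarith)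
  set μ : ℂ := ((((a + d : ℝ)) : ℂ) - Complex.I * (s : ℂ)) / ((((a + d : ℝ)) : ℂ) + Complex.I * (s : ℂ)) with hμ
  have hmul : ξ * μ = 1 := by
    rw [hξ, hμ, div_mul_div_comm, div_eq_one_iff_eq
      (mul_ne_zero (ne_sub_I hs _) (ne_add_I hs _))]
    ring
  have hiter : ∀ k : ℕ, ((mobius a b c d)^[k] = id ↔ ξ ^ k = 1) := by
    intro k
    constructor
    · intro hk
      have h1 := phiC_mobius_iter a b c d s hc hs hs2 k ∞
      rw [hk, ← hμ] at h1
      simp only [id_eq, phiC_infty, mul_one] at h1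
      have hμk : μ ^ k = 1 := h1.symm
      have : (ξ * μ) ^ k = 1 := by rw [hmul, one_pow]
      rw [mul_pow, hμk, mul_one] at this
      exact this
    · intro hk
      have hμk : μ ^ k = 1 := by
        have : (ξ * μ) ^ k = 1 := by rw [hmul, one_pow]
        rw [mul_pow, hk, one_mul] at this
        exact this
      funext x
      apply phiC_injective hc hs
      rw [phiC_mobius_iter a b c d s hc hs hs2 k x, ← hμ, hμk, one_mul]
      rfl
  constructor
  · rintro ⟨h1, h2⟩
    exact ⟨(hiter p).mp h1, fun k hk hkp hcon => h2 k hk hkp ((hiter k).mpr hcon)⟩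
  · rintro ⟨h1, h2⟩
    exact ⟨(hiter p).mpr h1, fun k hk hkp hcon => h2 k hk hkp ((hiter k).mp hcon)⟩
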